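/- Let 0 ≤ ρ₀ < t₀ ≤ ∞, let χ : (ρ₀, t₀) → (0, ∞) be continuous and integrable on compact subintervals, and let A : (ρ₀, t₀) → [0, ∞) be a non-negative function such that A(t)·χ(s) ≤ A(s)·χ(t) for all ρ₀ < s < t < t₀ (i.e., A/χ is non-increasing). Define V(r) := ∫_{ρ₀}^{r} A(t) dt. Then for all ρ₀ < r < R < t₀: V(R)/V(r) ≤ (∫_{ρ₀}^{R} χ(t) dt)/(∫_{ρ₀}^{r} χ(t) dt), provided V(r) > 0 and ∫_{ρ₀}^{r} χ > 0. -/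
import Mathlib


open Set MeasureTheory

/-- Relative volume comparison of Bishop–Gromov type: if `A/χ` is non-increasing on
`(ρ₀, t₀)` then the ratio of "volumes" `V(r) = ∫_{ρ₀}^r A` is controlled by the
ratio of the model volumes. -/
theorem stmt1 (ρ₀ : ℝ) (t₀ : EReal) (hρ₀ : 0 ≤ ρ₀) (hlt : (ρ₀ : EReal) < t₀)
    (χ A : ℝ → ℝ)
    (hχpos : ∀ t : ℝ, ρ₀ < t → (t : EReal) < t₀ → 0 < χ t)
    (hχcont : ContinuousOn χ {t : ℝ | ρ₀ < t ∧ (t : EReal) < t₀})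
    (hA : ∀ t : ℝ, ρ₀ < t → (t : EReal) < t₀ → 0 ≤ A t)
    (hmono : ∀ s t : ℝ, ρ₀ < s → s < t → (t : EReal) < t₀ → A t * χ s ≤ A s * χ t)
    (hχint : ∀ r : ℝ, ρ₀ < r → (r : EReal) < t₀ →
      IntervalIntegrable χ MeasureTheory.volume ρ₀ r)
    (hAint : ∀ r : ℝ, ρ₀ < r → (r : EReal) < t₀ →
      IntervalIntegrable A MeasureTheory.volume ρ₀ r)
    (r R : ℝ) (hr : ρ₀ < r) (hrR : r < R) (hR : (R : EReal) < t₀)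
    (hVr : 0 < ∫ t in ρ₀..r, A t) (hχr : 0 < ∫ t in ρ₀..r, χ t) :
    (∫ t in ρ₀..R, A t) / (∫ t in ρ₀..r, A t) ≤
      (∫ t in ρ₀..R, χ t) / (∫ t in ρ₀..r, χ t) := by
  have hrE : (r : EReal) < t₀ := lt_trans (by exact_mod_cast hrR) hR
  have hIr : IntervalIntegrable A volume ρ₀ r := hAint r hr hrE
  have hIR : IntervalIntegrable A volume ρ₀ R := hAint R (hr.trans hrR) hR
  have hJr : IntervalIntegrable χ volume ρ₀ r := hχint r hr hrE
  have hJR : IntervalIntegrable χ volume ρ₀ R := hχint R (hr.trans hrR) hR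
  have hArR : IntervalIntegrable A volume r R := hIr.symm.trans hIR
  have hχrR : IntervalIntegrable χ volume r R := hJr.symm.trans hJR
  -- pointwise bound on [r,R]
  have key : ∀ t ∈ Icc r R,
      A t * (∫ s in ρ₀..r, χ s) ≤ (∫ s in ρ₀..r, A s) * χ t := by
    intro t ht
    have htE : (t : EReal) < t₀ := lt_of_le_of_lt (by exact_mod_cast ht.2) hR
    have h1 : (∫ s in ρ₀..r, A t * χ s) ≤ ∫ s in ρ₀..r, A s * χ t := by
      apply intervalIntegral.integral_mono_ae_restrict hr.le
        (hJr.const_mul _) (hIr.mul_const _)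
      have hmz : (volume : Measure ℝ) ({ρ₀, r} : Set ℝ) = 0 :=
        (Set.toFinite _).measure_zero _
      have hae : ∀ᵐ s : ℝ, s ∉ ({ρ₀, r} : Set ℝ) :=
        measure_eq_zero_iff_ae_notMem.1 hmz
      filter_upwards [ae_restrict_mem measurableSet_Icc, ae_restrict_of_ae hae]
        with s hs hns
      have hs1 : ρ₀ < s := lt_of_le_of_ne hs.1 fun h => hns (Or.inl h.symm)
      have hs2 : s < r := lt_of_le_of_ne hs.2 fun h => hns (Or.inr h)
      exact hmono s t hs1 (hs2.trans_le ht.1) htE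
    simpa [intervalIntegral.integral_const_mul, intervalIntegral.integral_mul_const]
      using h1
  have key2 : (∫ t in r..R, A t) * (∫ s in ρ₀..r, χ s) ≤
      (∫ s in ρ₀..r, A s) * (∫ t in r..R, χ t) := by
    have h := intervalIntegral.integral_mono_on hrR.le
      (hArR.mul_const (∫ s in ρ₀..r, χ s))
      (hχrR.const_mul (∫ s in ρ₀..r, A s)) key
    simpa [intervalIntegral.integral_const_mul, intervalIntegral.integral_mul_const]
      using h
  have hsplitA : (∫ t in ρ₀..R, A t) = (∫ t in ρ₀..r, A t) + ∫ t in r..R, A t :=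
    (intervalIntegral.integral_add_adjacent_intervals hIr hArR).symm
  have hsplitχ : (∫ t in ρ₀..R, χ t) = (∫ t in ρ₀..r, χ t) + ∫ t in r..R, χ t :=
    (intervalIntegral.integral_add_adjacent_intervals hJr hχrR).symm
  rw [div_le_div_iff₀ hVr hχr, hsplitA, hsplitχ]
  nlinarith [key2]
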